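/- arXiv:1104.4762 — 4 statements merged into one kernel-verified Lean document; each statement's English description precedes it below -/
import Mathlib

section
/- Let Σ be a group, M a Σ-module, and α an element of the center of Σ. Then every element of H¹(Σ, M) is annihilated by the map M → M sending x to αx − x. In particular, if this map is an automorphism of M, then H¹(Σ, M) = 0. -/
/-- Sah's lemma: if `α` is central in `Σ`, every 1-cocycle class is annihilated by
`x ↦ α•x - x`; in particular if that map is an automorphism of `M`, then `H¹(Σ, M) = 0`
(every cocycle is a coboundary). -/
theorem stmt_0 {G M : Type*} [Group G] [AddCommGroup M] [DistribMulAction G M]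
    (α : G) (hα : α ∈ Subgroup.center G)
    (Z : G → M) (hZ : ∀ σ τ : G, Z (σ * τ) = Z σ + σ • Z τ) :
    (∃ P : M, ∀ σ : G, α • Z σ - Z σ = σ • P - P) ∧
      (Function.Bijective (fun x : M => α • x - x) →
        ∃ P : M, ∀ σ : G, Z σ = σ • P - P) := by
  rw [Subgroup.mem_center_iff] at hα
  have key : ∀ σ : G, α • Z σ - Z σ = σ • Z α - Z α := by
    intro σ
    have h1 := hZ α σ
    have h2 := hZ σ α
    rw [hα σ] at h2
    have h3 := h1.symm.trans h2
    rw [sub_eq_sub_iff_add_eq_add, add_comm, h3, add_comm]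
  refine ⟨⟨Z α, key⟩, fun hb => ?_⟩
  obtain ⟨Q, hQ⟩ := hb.surjective (Z α)
  have hQ' : α • Q - Q = Z α := hQ
  refine ⟨Q, fun σ => hb.injective ?_⟩
  show α • Z σ - Z σ = α • (σ • Q - Q) - (σ • Q - Q)
  have : α • (σ • Q - Q) - (σ • Q - Q) = σ • (α • Q - Q) - (α • Q - Q) := by
    rw [smul_sub, smul_sub, smul_smul α σ, smul_smul σ α, hα σ]
    abel
  rw [this, hQ', key]
end

section
/- Let p be a prime, n ≥ 1, and G ≤ GL₂(ℤ/pⁿℤ). Suppose G contains a diagonal matrix ρₙ = diag(λ₁, λ₂) with λ₁ ≢ 1 mod p and λ₂ ≢ 1 mod p. If Z : G → (ℤ/pⁿℤ)² is a cocycle (Z_{στ} = Z_σ + σ·Z_τ) whose restrictions to two subgroups L, U ≤ G with ρₙ ∈ L ∩ U are both coboundaries, and L and U together generate G, then Z is a coboundary on G. -/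
/-!
Since `ρ = diag(λ₁, λ₂)` with both `λᵢ - 1` units of `ℤ/pⁿℤ`, the map `P ↦ ρP - P` is injective,
so the vectors `P` and `Q` witnessing the coboundary conditions on `L` and `U` coincide (both
equal `(ρ - 1)⁻¹ Z_ρ`). For a cocycle, the elements `σ` with `Z_σ = σP - P` form a subgroup; it
contains `L` and `U`, hence all of `G = L ⊔ U`.
-/

theorem ZMod.isUnit_of_castHom_ne_zero {p n : ℕ} (hp : p.Prime) (hn : n ≠ 0) {x : ZMod (p ^ n)}
    (hx : ZMod.castHom (dvd_pow_self p hn) (ZMod p) x ≠ 0) : IsUnit x := by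
  have : NeZero (p ^ n) := ⟨pow_ne_zero n hp.ne_zero⟩
  rw [← ZMod.natCast_zmod_val x, ZMod.isUnit_natCast_iff_not_dvd_pow hp (Nat.pos_of_ne_zero hn)]
  intro hdvd
  apply hx
  rwa [ZMod.castHom_apply, ← ZMod.natCast_val, ZMod.natCast_eq_zero_iff]

section Cocycle

open Matrix

variable {ι R : Type*} [Fintype ι] [DecidableEq ι] [CommRing R]

theorem Matrix.diagonal_mulVec_sub_self_injective {d : ι → R} (hd : ∀ i, IsUnit (d i - 1)) :
    Function.Injective fun v : ι → R => diagonal d *ᵥ v - v := by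
  intro v w hvw
  funext i
  have hi := congrFun hvw i
  simp only [mulVec_diagonal, Pi.sub_apply] at hi
  exact (hd i).mul_left_cancel (by linear_combination hi)

def IsCocycleOn (G : Subgroup (GL ι R)) (Z : GL ι R → ι → R) : Prop :=
  ∀ σ ∈ G, ∀ τ ∈ G, Z (σ * τ) = Z σ + (σ : Matrix ι ι R) *ᵥ Z τ

namespace IsCocycleOn

variable {G : Subgroup (GL ι R)} {Z : GL ι R → ι → R}

theorem map_one (hZ : IsCocycleOn G Z) : Z 1 = 0 := by
  simpa using hZ 1 G.one_mem 1 G.one_mem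

def coboundaryLocus (hZ : IsCocycleOn G Z) (P : ι → R) : Subgroup (GL ι R) where
  carrier := {σ | σ ∈ G ∧ Z σ = (σ : Matrix ι ι R) *ᵥ P - P}
  one_mem' := ⟨G.one_mem, by simp [hZ.map_one]⟩
  mul_mem' := by
    rintro σ τ ⟨hσ, hZσ⟩ ⟨hτ, hZτ⟩
    refine ⟨G.mul_mem hσ hτ, ?_⟩
    rw [hZ σ hσ τ hτ, hZσ, hZτ, Units.val_mul, ← Matrix.mulVec_mulVec, Matrix.mulVec_sub]
    abel
  inv_mem' := by
    rintro σ ⟨hσ, hZσ⟩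
    refine ⟨G.inv_mem hσ, ?_⟩
    have hcoc := hZ σ⁻¹ (G.inv_mem hσ) σ hσ
    rw [inv_mul_cancel, hZ.map_one, hZσ, Matrix.mulVec_sub, Matrix.mulVec_mulVec,
      ← Units.val_mul, inv_mul_cancel, Units.val_one, Matrix.one_mulVec] at hcoc
    linear_combination -hcoc

theorem eq_coboundary_of_sup {L U : Subgroup (GL ι R)} (hZ : IsCocycleOn (L ⊔ U) Z) {P : ι → R}
    (hL : ∀ σ ∈ L, Z σ = (σ : Matrix ι ι R) *ᵥ P - P)
    (hU : ∀ σ ∈ U, Z σ = (σ : Matrix ι ι R) *ᵥ P - P) :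
    ∀ σ ∈ L ⊔ U, Z σ = (σ : Matrix ι ι R) *ᵥ P - P := by
  have hle : L ⊔ U ≤ hZ.coboundaryLocus P :=
    sup_le (fun σ hσ => ⟨Subgroup.mem_sup_left hσ, hL σ hσ⟩)
      (fun σ hσ => ⟨Subgroup.mem_sup_right hσ, hU σ hσ⟩)
  exact fun σ hσ => (hle hσ).2

end IsCocycleOn

end Cocycle

/-- Gluing coboundaries: if a cocycle on `G ≤ GL₂(ℤ/pⁿℤ)` is a coboundary on two
subgroups `L, U` that both contain a diagonal `ρₙ = diag(λ₁, λ₂)` with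
`λ₁, λ₂ ≢ 1 mod p` and that together generate `G`, then it is a coboundary on `G`. -/
theorem stmt_8 (p : ℕ) (hp : p.Prime) (n : ℕ) (hn : 1 ≤ n)
    (G L U : Subgroup (GL (Fin 2) (ZMod (p ^ n))))
    (hgen : G = L ⊔ U)
    (lam1 lam2 : ZMod (p ^ n))
    (h1 : ZMod.castHom (dvd_pow_self p (by omega : n ≠ 0)) (ZMod p) lam1 ≠ 1)
    (h2 : ZMod.castHom (dvd_pow_self p (by omega : n ≠ 0)) (ZMod p) lam2 ≠ 1)
    (rho : GL (Fin 2) (ZMod (p ^ n))) (hrhoL : rho ∈ L) (hrhoU : rho ∈ U)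
    (hrho : (rho : Matrix (Fin 2) (Fin 2) (ZMod (p ^ n))) = !![lam1, 0; 0, lam2])
    (Z : GL (Fin 2) (ZMod (p ^ n)) → (Fin 2 → ZMod (p ^ n)))
    (hZ : ∀ σ ∈ G, ∀ τ ∈ G, Z (σ * τ) = Z σ +
      (σ : Matrix (Fin 2) (Fin 2) (ZMod (p ^ n))).mulVec (Z τ))
    (hL : ∃ P : Fin 2 → ZMod (p ^ n), ∀ σ ∈ L,
      Z σ = (σ : Matrix (Fin 2) (Fin 2) (ZMod (p ^ n))).mulVec P - P)
    (hU : ∃ Q : Fin 2 → ZMod (p ^ n), ∀ σ ∈ U,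
      Z σ = (σ : Matrix (Fin 2) (Fin 2) (ZMod (p ^ n))).mulVec Q - Q) :
    ∃ P : Fin 2 → ZMod (p ^ n), ∀ σ ∈ G,
      Z σ = (σ : Matrix (Fin 2) (Fin 2) (ZMod (p ^ n))).mulVec P - P := by
  obtain ⟨P, hP⟩ := hL
  obtain ⟨Q, hQ⟩ := hU
  have hunit : ∀ i, IsUnit (![lam1, lam2] i - 1) := by
    intro i
    refine ZMod.isUnit_of_castHom_ne_zero hp (by omega) ?_
    rw [map_sub, map_one, sub_ne_zero]
    fin_cases i
    exacts [h1, h2]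
  have hrho_diag : (rho : Matrix (Fin 2) (Fin 2) (ZMod (p ^ n))) =
      Matrix.diagonal ![lam1, lam2] := by
    rw [hrho, Matrix.diagonal_fin_two]
    rfl
  have hPQ : P = Q := Matrix.diagonal_mulVec_sub_self_injective hunit <| by
    simpa only [hrho_diag] using (hP rho hrhoL).symm.trans (hQ rho hrhoU)
  subst hPQ
  subst hgen
  exact ⟨P, IsCocycleOn.eq_coboundary_of_sup hZ hP hQ⟩
end

section
/- Let p be a prime, n ≥ 1, and let Σ ≤ GL₂(ℤ/pⁿℤ) be a group acting on M = (ℤ/pⁿℤ)² with a normal commutator subgroup Σ′ such that Σ′ is cyclic, and suppose Σ contains a central-in-quotient element whose induced map x ↦ αx − x is an automorphism of M^{Σ′}. Then H¹_loc(Σ, M) = 0, where H¹_loc is the intersection of the kernels of the restriction maps H¹(Σ, M) → H¹(C, M) over all cyclic subgroups C of Σ. -/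
/-!
Subtracting a coboundary makes a locally trivial cocycle vanish at a generator of the cyclic
group `Σ′`, hence on all of `Σ′`. A cocycle `f` vanishing on the normal subgroup `Σ′` takes values
in `M^{Σ′}`, on which `Σ` acts through the abelian group `Σ/Σ′`, and `f(ασ) = f(σα)`. Sah's
argument then finishes: write `f α = (α - 1) P` with `P ∈ M^{Σ′}`; expanding `f(ασ) = f(σα)` gives
`(α - 1) f σ = (α - 1)(σ - 1) P`, and `α - 1` is injective on `M^{Σ′}`, so `f σ = (σ - 1) P`.
-/

open MulAction
open scoped commutatorElement

section FixedPoints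

variable {G A : Type*} [Group G]

theorem mul_eq_mul_mul_commutatorElement (a b : G) : a * b = b * a * ⁅a⁻¹, b⁻¹⁆ := by
  rw [commutatorElement_def]
  group

variable [AddCommGroup A] [DistribMulAction G A] {N : Subgroup G}

theorem sub_mem_fixedPoints {x y : A} (hx : x ∈ fixedPoints N A) (hy : y ∈ fixedPoints N A) :
    x - y ∈ fixedPoints N A := fun h => by
  rw [smul_sub, hx h, hy h]

theorem smul_smul_comm_of_mem_fixedPoints (hN : commutator G ≤ N) {x : A}
    (hx : x ∈ fixedPoints N A) (α σ : G) : α • σ • x = σ • α • x := by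
  have hc : ⁅α⁻¹, σ⁻¹⁆ ∈ N := hN (Subgroup.commutator_mem_commutator trivial trivial)
  have hcx : ⁅α⁻¹, σ⁻¹⁆ • x = x := hx ⟨_, hc⟩
  rw [smul_smul, smul_smul, mul_eq_mul_mul_commutatorElement, mul_smul, hcx]

end FixedPoints

namespace groupCohomology

variable {G A : Type*} [Group G] [AddCommGroup A] [DistribMulAction G A] {f : G → A}

theorem IsCocycle₁.sub_coboundary (hf : IsCocycle₁ f) (x : A) :
    IsCocycle₁ fun g => f g - (g • x - x) := by
  intro g h
  simp only [hf g h, mul_smul, smul_sub]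
  abel

theorem IsCoboundary₁.of_sub_coboundary {x : A}
    (hf : IsCoboundary₁ fun g => f g - (g • x - x)) : IsCoboundary₁ f := by
  obtain ⟨y, hy⟩ := hf
  refine ⟨y + x, fun g => ?_⟩
  have hyg : g • y - y = f g - (g • x - x) := hy g
  rw [smul_add, sub_eq_iff_eq_add.mp hyg]
  abel

def IsCocycle₁.ker (hf : IsCocycle₁ f) : Subgroup G where
  carrier := {g | f g = 0}
  mul_mem' {g h} (hg : f g = 0) (hh : f h = 0) := show f (g * h) = 0 by
    rw [hf g h, hg, hh, smul_zero, add_zero]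
  one_mem' := map_one_of_isCocycle₁ hf
  inv_mem' {g} (hg : f g = 0) := show f g⁻¹ = 0 by
    have := map_inv_of_isCocycle₁ hf g
    rwa [hg, neg_zero, smul_eq_zero_iff_eq] at this

theorem IsCocycle₁.smul_map_of_map_eq_zero (hf : IsCocycle₁ f) {h σ : G} (hh : f h = 0)
    (hconj : f (σ⁻¹ * h * σ) = 0) : h • f σ = f σ := by
  have hleft := hf h σ
  have hright := hf σ (σ⁻¹ * h * σ)
  rw [hh, add_zero] at hleft
  rw [hconj, smul_zero, zero_add, show σ * (σ⁻¹ * h * σ) = h * σ by group] at hright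
  rw [← hleft, hright]

theorem IsCocycle₁.map_mem_fixedPoints (hf : IsCocycle₁ f) {N : Subgroup G} [hN : N.Normal]
    (hker : N ≤ hf.ker) (σ : G) : f σ ∈ fixedPoints N A := fun h =>
  hf.smul_map_of_map_eq_zero (hker h.2) <| hker <| by
    simpa using hN.conj_mem' _ h.2 σ

theorem IsCocycle₁.map_mul_comm (hf : IsCocycle₁ f) (hker : commutator G ≤ hf.ker) (α σ : G) :
    f (α * σ) = f (σ * α) := by
  have hc : f ⁅α⁻¹, σ⁻¹⁆ = 0 := hker (Subgroup.commutator_mem_commutator trivial trivial)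
  rw [mul_eq_mul_mul_commutatorElement, hf, hc, smul_zero, zero_add]

theorem IsCocycle₁.isCoboundary₁_of_bijOn (hf : IsCocycle₁ f) {N : Subgroup G}
    (hN : commutator G ≤ N) (hker : N ≤ hf.ker) (α : G)
    (hα : Set.BijOn (fun x => α • x - x) (fixedPoints N A) (fixedPoints N A)) :
    IsCoboundary₁ f := by
  have := Subgroup.Normal.of_commutator_le _ hN
  obtain ⟨P, hPN, hP⟩ := hα.surjOn (hf.map_mem_fixedPoints hker α)
  refine ⟨P, fun σ => hα.injOn ?_ (hf.map_mem_fixedPoints hker σ) ?_⟩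
  · exact sub_mem_fixedPoints (smul_mem_fixedPoints_of_normal σ hPN) hPN
  · have hcomm := hf.map_mul_comm (hN.trans hker) α σ
    rw [hf, hf, ← hP] at hcomm
    simp only [smul_sub, smul_smul_comm_of_mem_fixedPoints hN hPN α σ] at hcomm ⊢
    linear_combination (norm := abel) -hcomm

theorem IsCocycle₁.exists_sub_coboundary_le_ker (hf : IsCocycle₁ f) (N : Subgroup G)
    [hN : IsCyclic N] (hloc : ∀ g ∈ N, ∃ x : A, f g = g • x - x) :
    ∃ x : A, N ≤ (hf.sub_coboundary x).ker := by
  obtain ⟨g, rfl⟩ := N.isCyclic_iff_exists_zpowers_eq_top.mp hN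
  obtain ⟨x, hx⟩ := hloc g (Subgroup.mem_zpowers g)
  exact ⟨x, Subgroup.zpowers_le.mpr (sub_eq_zero.mpr hx)⟩

theorem IsCocycle₁.isCoboundary₁_of_isCyclic (hf : IsCocycle₁ f) {N : Subgroup G} [IsCyclic N]
    (hN : commutator G ≤ N) (hloc : ∀ g ∈ N, ∃ x : A, f g = g • x - x) (α : G)
    (hα : Set.BijOn (fun x => α • x - x) (fixedPoints N A) (fixedPoints N A)) :
    IsCoboundary₁ f := by
  obtain ⟨x, hx⟩ := hf.exists_sub_coboundary_le_ker N hloc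
  exact ((hf.sub_coboundary x).isCoboundary₁_of_bijOn hN hx α hα).of_sub_coboundary

end groupCohomology

open groupCohomology

theorem stmt_9_general (p : ℕ) (n : ℕ)
    (S : Subgroup (GL (Fin 2) (ZMod (p ^ n))))
    (hcyc : IsCyclic ↥(⁅S, S⁆ : Subgroup (GL (Fin 2) (ZMod (p ^ n)))))
    (F : Set (Fin 2 → ZMod (p ^ n)))
    (hF : F = {x | ∀ h ∈ (⁅S, S⁆ : Subgroup (GL (Fin 2) (ZMod (p ^ n)))),
      (h : Matrix (Fin 2) (Fin 2) (ZMod (p ^ n))).mulVec x = x})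
    (α : GL (Fin 2) (ZMod (p ^ n))) (hαS : α ∈ S)
    (hbij : Set.BijOn
      (fun x : Fin 2 → ZMod (p ^ n) =>
        (α : Matrix (Fin 2) (Fin 2) (ZMod (p ^ n))).mulVec x - x) F F)
    (Z : GL (Fin 2) (ZMod (p ^ n)) → (Fin 2 → ZMod (p ^ n)))
    (hZ : ∀ σ ∈ S, ∀ τ ∈ S, Z (σ * τ) = Z σ +
      (σ : Matrix (Fin 2) (Fin 2) (ZMod (p ^ n))).mulVec (Z τ))
    (hloc : ∀ σ ∈ S, ∃ W : Fin 2 → ZMod (p ^ n),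
      Z σ = (σ : Matrix (Fin 2) (Fin 2) (ZMod (p ^ n))).mulVec W - W) :
    ∃ P : Fin 2 → ZMod (p ^ n), ∀ σ ∈ S,
      Z σ = (σ : Matrix (Fin 2) (Fin 2) (ZMod (p ^ n))).mulVec P - P := by
  have hf : IsCocycle₁ fun σ : S => Z σ := fun σ τ => (hZ σ σ.2 τ τ.2).trans (add_comm _ _)
  let N := ⁅S, S⁆.subgroupOf S
  have : IsCyclic N := (Subgroup.subgroupOfEquivOfLe S.commutator_le_self).symm.isCyclic.mp hcyc
  have hN : commutator S ≤ N := Subgroup.commutator_le.mpr fun a _ b _ =>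
    Subgroup.mem_subgroupOf.mpr (Subgroup.commutator_mem_commutator a.2 b.2)
  have hFN : F = fixedPoints N (Fin 2 → ZMod (p ^ n)) := by
    ext x
    simp only [hF, Set.mem_ofPred_eq, MulAction.mem_fixedPoints, Subtype.forall]
    exact ⟨fun h σ _ hσ => h σ hσ, fun h σ hσ => h σ (S.commutator_le_self hσ) hσ⟩
  obtain ⟨P, hP⟩ := hf.isCoboundary₁_of_isCyclic hN (fun σ _ => hloc σ σ.2) ⟨α, hαS⟩ (hFN ▸ hbij)
  exact ⟨P, fun σ hσ => (hP ⟨σ, hσ⟩).symm⟩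

/-- If `Σ ≤ GL₂(ℤ/pⁿℤ)` has cyclic commutator subgroup `Σ′` and contains an element `α`
such that `x ↦ αx - x` is an automorphism of the fixed points `M^{Σ′}`, then
`H¹_loc(Σ, M) = 0`: every cocycle satisfying the local conditions is a coboundary. -/
theorem stmt_9 (p : ℕ) (hp : p.Prime) (n : ℕ) (hn : 1 ≤ n)
    (S : Subgroup (GL (Fin 2) (ZMod (p ^ n))))
    (hcyc : IsCyclic ↥(⁅S, S⁆ : Subgroup (GL (Fin 2) (ZMod (p ^ n)))))
    (F : Set (Fin 2 → ZMod (p ^ n)))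
    (hF : F = {x | ∀ h ∈ (⁅S, S⁆ : Subgroup (GL (Fin 2) (ZMod (p ^ n)))),
      (h : Matrix (Fin 2) (Fin 2) (ZMod (p ^ n))).mulVec x = x})
    (α : GL (Fin 2) (ZMod (p ^ n))) (hαS : α ∈ S)
    (hbij : Set.BijOn
      (fun x : Fin 2 → ZMod (p ^ n) =>
        (α : Matrix (Fin 2) (Fin 2) (ZMod (p ^ n))).mulVec x - x) F F)
    (Z : GL (Fin 2) (ZMod (p ^ n)) → (Fin 2 → ZMod (p ^ n)))
    (hZ : ∀ σ ∈ S, ∀ τ ∈ S, Z (σ * τ) = Z σ +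
      (σ : Matrix (Fin 2) (Fin 2) (ZMod (p ^ n))).mulVec (Z τ))
    (hloc : ∀ σ ∈ S, ∃ W : Fin 2 → ZMod (p ^ n),
      Z σ = (σ : Matrix (Fin 2) (Fin 2) (ZMod (p ^ n))).mulVec W - W) :
    ∃ P : Fin 2 → ZMod (p ^ n), ∀ σ ∈ S,
      Z σ = (σ : Matrix (Fin 2) (Fin 2) (ZMod (p ^ n))).mulVec P - P :=
  stmt_9_general p n S hcyc F hF α hαS hbij Z hZ hloc
end

section
/- Let p be a prime, n ≥ 1, and let Σ be the subgroup of GL₂(ℤ/pⁿℤ) generated by ρ = diag(λ₁, λ₂) (with λᵢ units, order of ρ coprime to p) and a cyclic p-group N of strictly lower triangular unipotent matrices normalized by ρ. Then N is the unique p-Sylow subgroup of Σ, and H¹_loc(Σ, (ℤ/pⁿℤ)²) = 0. -/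
/-!
Since `ρ` normalizes `N`, the group `Σ = N ⊔ ⟨ρ⟩` equals `N ⟨ρ⟩`, so the `m`-th power of every
element of `Σ` lies in `N`, where `m` is the order of `ρ`; an element of `p`-power order is a power
of its `m`-th power, because `m` is prime to `p`, and hence lies in `N`.

For a locally trivial cocycle `Z`, triviality at a generator of the cyclic group `N` lets us
subtract a coboundary so that `Z` vanishes on `N`. Then `Z` is constant on the cosets `N h`, and
averaging `Z(σh)` over `h ∈ ⟨ρ⟩` gives `m Z(σ) = T - σ T` with `T = ∑ Z h`; as `m` is a unit
mod `pⁿ`, `Z` is the coboundary of `-m⁻¹ T`.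
-/

open Subgroup

namespace Subgroup

variable {G : Type*} [Group G] {N : Subgroup G}

theorem closure_insert_eq_sup_zpowers (N : Subgroup G) (ρ : G) :
    closure (insert ρ (N : Set G)) = N ⊔ zpowers ρ := by
  rw [Set.insert_eq, closure_union, closure_eq, ← zpowers_eq_closure, sup_comm]

theorem mul_pow_mul_inv_pow_mem {g h : G} (hg : g ∈ N) (hh : h ∈ normalizer (N : Set G))
    (k : ℕ) :
    (g * h) ^ k * (h ^ k)⁻¹ ∈ N := by
  induction k with
  | zero => simp
  | succ k ih =>
    have hconj : h ^ k * g * (h ^ k)⁻¹ ∈ N :=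
      (mem_normalizer_iff.mp (pow_mem hh k) g).mp hg
    have e : (g * h) ^ (k + 1) * (h ^ (k + 1))⁻¹ =
        (g * h) ^ k * (h ^ k)⁻¹ * (h ^ k * g * (h ^ k)⁻¹) := by
      rw [pow_succ, pow_succ]; group
    rw [e]
    exact mul_mem ih hconj

theorem mem_of_pow_mem_of_coprime {x : G} {m : ℕ} (hx : x ^ m ∈ N)
    (hm : m.Coprime (orderOf x)) : x ∈ N := by
  obtain ⟨k, hk⟩ := exists_pow_eq_self_of_coprime hm
  exact hk ▸ pow_mem hx k

theorem pow_orderOf_mem_of_mem_sup_zpowers {ρ x : G} (hρ : ρ ∈ normalizer (N : Set G))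
    (hx : x ∈ N ⊔ zpowers ρ) : x ^ orderOf ρ ∈ N := by
  rw [← SetLike.mem_coe, coe_mul_of_right_le_normalizer_left N _ (zpowers_le.mpr hρ)] at hx
  obtain ⟨g, hg, h, hh, rfl⟩ := hx
  have hpow : h ^ orderOf ρ = 1 :=
    orderOf_dvd_iff_pow_eq_one.mp (orderOf_dvd_of_mem_zpowers hh)
  simpa [hpow] using mul_pow_mul_inv_pow_mem hg (zpowers_le.mpr hρ hh) (orderOf ρ)

theorem le_of_isPGroup_of_le_sup_zpowers {p : ℕ} {ρ : G} (hρ : ρ ∈ normalizer (N : Set G))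
    (hord : (orderOf ρ).Coprime p) {Q : Subgroup G} (hQ : Q ≤ N ⊔ zpowers ρ)
    (hQp : IsPGroup p Q) : Q ≤ N := by
  intro q hq
  obtain ⟨k, hk⟩ := hQp ⟨q, hq⟩
  have hdvd : orderOf q ∣ p ^ k :=
    orderOf_dvd_of_pow_eq_one (by simpa using congrArg Subtype.val hk)
  exact mem_of_pow_mem_of_coprime (pow_orderOf_mem_of_mem_sup_zpowers hρ (hQ hq))
    ((hord.pow_right k).coprime_dvd_right hdvd)

end Subgroup

namespace Representation

variable {G R V : Type*} [Group G] [CommRing R] [AddCommGroup V] [Module R V]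
  (π : Representation R G V)

def IsCocycleOn (S : Subgroup G) (Z : G → V) : Prop :=
  ∀ σ ∈ S, ∀ τ ∈ S, Z (σ * τ) = Z σ + π σ (Z τ)

def IsCoboundaryOn (S : Subgroup G) (Z : G → V) : Prop :=
  ∃ P : V, ∀ σ ∈ S, Z σ = π σ P - P

variable {π} {S : Subgroup G} {Z : G → V}

namespace IsCocycleOn

theorem map_one (hZ : π.IsCocycleOn S Z) : Z 1 = 0 := by
  simpa using hZ 1 (one_mem S) 1 (one_mem S)

theorem sub_coboundary (hZ : π.IsCocycleOn S Z) (W : V) :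
    π.IsCocycleOn S (fun σ => Z σ - (π σ W - W)) := by
  intro σ hσ τ hτ
  simp only [hZ σ hσ τ hτ, map_mul, Module.End.mul_apply, map_sub]
  abel

def ker (hZ : π.IsCocycleOn S Z) : Subgroup G where
  carrier := {σ | σ ∈ S ∧ Z σ = 0}
  mul_mem' := fun ⟨hσ, hZσ⟩ ⟨hτ, hZτ⟩ => ⟨mul_mem hσ hτ, by simp [hZ _ hσ _ hτ, hZσ, hZτ]⟩
  one_mem' := ⟨one_mem S, hZ.map_one⟩
  inv_mem' := fun {σ} ⟨hσ, hZσ⟩ => ⟨inv_mem hσ, by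
    simpa [hZσ, hZ.map_one] using (hZ _ (inv_mem hσ) _ hσ).symm⟩

theorem eq_zero_of_mem_closure (hZ : π.IsCocycleOn S Z) {s : Set G} (hs : s ⊆ S)
    (hZs : ∀ σ ∈ s, Z σ = 0) {σ : G} (hσ : σ ∈ closure s) : Z σ = 0 :=
  ((closure_le hZ.ker).mpr (fun τ hτ => ⟨hs hτ, hZs τ hτ⟩) hσ).2

theorem map_mul_of_mem_normalizer {N H : Subgroup G} (hZ : π.IsCocycleOn (N ⊔ H) Z)
    (hZN : ∀ g ∈ N, Z g = 0) (hH : H ≤ normalizer (N : Set G)) {g h : G} (hg : g ∈ N)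
    (hh : h ∈ H) : Z (g * h) = Z h := by
  have hconj : h⁻¹ * g * h ∈ N := (mem_normalizer_iff''.mp (hH hh) g).mp hg
  have e : g * h = h * (h⁻¹ * g * h) := by group
  rw [e, hZ h (mem_sup_right hh) _ (mem_sup_left hconj), hZN _ hconj, map_zero, add_zero]

theorem isCoboundaryOn_of_eq_zero {N H : Subgroup G} [Finite H]
    (hZ : π.IsCocycleOn (N ⊔ H) Z) (hZN : ∀ g ∈ N, Z g = 0) (hH : H ≤ normalizer (N : Set G))
    (hunit : IsUnit (Nat.card H : R)) : π.IsCoboundaryOn (N ⊔ H) Z := by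
  have : Fintype H := Fintype.ofFinite H
  set T : V := ∑ h : H, Z h
  have hsum : ∀ σ ∈ N ⊔ H, (Nat.card H : R) • Z σ = T - π σ T := by
    intro σ hσ
    have hcoc : ∑ h : H, Z (σ * h) = (Nat.card H : R) • Z σ + π σ T := by
      simp only [hZ σ hσ _ (mem_sup_right (Subtype.prop _)), Finset.sum_add_distrib,
        Finset.sum_const, Finset.card_univ, map_sum, T, Nat.card_eq_fintype_card,
        Nat.cast_smul_eq_nsmul]
    have hinv : ∑ h : H, Z (σ * h) = T := by
      rw [← SetLike.mem_coe, coe_mul_of_right_le_normalizer_left N H hH] at hσ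
      obtain ⟨g, hg, h₀, hh₀, rfl⟩ := hσ
      calc ∑ h : H, Z (g * h₀ * h)
          = ∑ h : H, Z ((⟨h₀, hh₀⟩ * h : H) : G) := by
            refine Finset.sum_congr rfl fun h _ => ?_
            rw [mul_assoc, hZ.map_mul_of_mem_normalizer hZN hH hg (mul_mem hh₀ h.2)]
            rfl
        _ = T := Equiv.sum_comp (Equiv.mulLeft (⟨h₀, hh₀⟩ : H)) (fun h : H => Z h)
    exact eq_sub_of_add_eq (hcoc.symm.trans hinv)
  obtain ⟨c, hc⟩ := hunit.exists_left_inv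
  refine ⟨-(c • T), fun σ hσ => ?_⟩
  calc Z σ = c • ((Nat.card H : R) • Z σ) := by rw [smul_smul, hc, one_smul]
    _ = π σ (-(c • T)) - -(c • T) := by rw [hsum σ hσ, map_neg, map_smul]; module

theorem isCoboundaryOn_of_isCyclic {N H : Subgroup G} [IsCyclic N] [Finite H]
    (hZ : π.IsCocycleOn (N ⊔ H) Z) (hloc : ∀ σ ∈ N, ∃ W, Z σ = π σ W - W)
    (hH : H ≤ normalizer (N : Set G)) (hunit : IsUnit (Nat.card H : R)) :
    π.IsCoboundaryOn (N ⊔ H) Z := by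
  obtain ⟨g, rfl⟩ := (Subgroup.isCyclic_iff_exists_zpowers_eq_top N).mp ‹_›
  obtain ⟨W, hW⟩ := hloc g (mem_zpowers g)
  have hZ' := hZ.sub_coboundary W
  have hZ'N : ∀ σ ∈ zpowers g, Z σ - (π σ W - W) = 0 := fun σ hσ =>
    hZ'.eq_zero_of_mem_closure (s := {g}) (by simpa using mem_sup_left (mem_zpowers g))
      (by simp [hW]) (zpowers_eq_closure g ▸ hσ)
  obtain ⟨P, hP⟩ := hZ'.isCoboundaryOn_of_eq_zero hZ'N hH hunit
  refine ⟨P + W, fun σ hσ => ?_⟩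
  rw [map_add, sub_eq_iff_eq_add.mp (hP σ hσ)]
  abel

end IsCocycleOn

end Representation

namespace Matrix.GeneralLinearGroup

variable (n R : Type*) [Fintype n] [DecidableEq n] [CommRing R]

def mulVecRep : Representation R (GL n R) (n → R) :=
  (Units.coeHom _).comp toLin.toMonoidHom

end Matrix.GeneralLinearGroup

open Representation Matrix.GeneralLinearGroup in
theorem stmt_16_general (p : ℕ) (hp : p.Prime) (n : ℕ)
    (rho : GL (Fin 2) (ZMod (p ^ n)))
    (hord : Nat.Coprime (orderOf rho) p)
    (N : Subgroup (GL (Fin 2) (ZMod (p ^ n))))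
    (hNcyc : IsCyclic ↥N)
    (hnorm : ∀ h ∈ N, rho * h * rho⁻¹ ∈ N)
    (S : Subgroup (GL (Fin 2) (ZMod (p ^ n))))
    (hS : S = Subgroup.closure (insert rho (N : Set (GL (Fin 2) (ZMod (p ^ n)))))) :
    (N ≤ S ∧ ∀ Q : Subgroup (GL (Fin 2) (ZMod (p ^ n))),
        Q ≤ S → IsPGroup p ↥Q → Q ≤ N) ∧
    (∀ Z : GL (Fin 2) (ZMod (p ^ n)) → (Fin 2 → ZMod (p ^ n)),
      (∀ σ ∈ S, ∀ τ ∈ S, Z (σ * τ) = Z σ +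
        (σ : Matrix (Fin 2) (Fin 2) (ZMod (p ^ n))).mulVec (Z τ)) →
      (∀ σ ∈ S, ∃ W : Fin 2 → ZMod (p ^ n),
        Z σ = (σ : Matrix (Fin 2) (Fin 2) (ZMod (p ^ n))).mulVec W - W) →
      ∃ P : Fin 2 → ZMod (p ^ n), ∀ σ ∈ S,
        Z σ = (σ : Matrix (Fin 2) (Fin 2) (ZMod (p ^ n))).mulVec P - P) := by
  have : NeZero (p ^ n) := ⟨pow_ne_zero n hp.ne_zero⟩
  have hρ : rho ∈ normalizer (N : Set _) := mem_normalizer_fintype hnorm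
  rw [closure_insert_eq_sup_zpowers] at hS
  subst hS
  refine ⟨⟨le_sup_left, fun Q hQ hQp => le_of_isPGroup_of_le_sup_zpowers hρ hord hQ hQp⟩,
    fun Z hZ hloc => ?_⟩
  have hunit : IsUnit (Nat.card (zpowers rho) : ZMod (p ^ n)) := by
    rw [Nat.card_zpowers, ZMod.isUnit_iff_coprime]
    exact hord.pow_right n
  have hcoc : (mulVecRep (Fin 2) (ZMod (p ^ n))).IsCocycleOn (N ⊔ zpowers rho) Z := hZ
  exact hcoc.isCoboundaryOn_of_isCyclic (fun σ hσ => hloc σ (mem_sup_left hσ))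
    (zpowers_le.mpr hρ) hunit

/-- If `Σ` is generated by a diagonal `ρ` of order coprime to `p` and a cyclic `p`-group
`N` of strictly lower triangular unipotent matrices normalized by `ρ`, then `N` is the
unique `p`-Sylow subgroup of `Σ` and `H¹_loc(Σ, (ℤ/pⁿℤ)²) = 0`. -/
theorem stmt_16 (p : ℕ) (hp : p.Prime) (n : ℕ) (hn : 1 ≤ n)
    (lam1 lam2 : ZMod (p ^ n)) (h1 : IsUnit lam1) (h2 : IsUnit lam2)
    (rho : GL (Fin 2) (ZMod (p ^ n)))
    (hrho : (rho : Matrix (Fin 2) (Fin 2) (ZMod (p ^ n))) = !![lam1, 0; 0, lam2])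
    (hord : Nat.Coprime (orderOf rho) p)
    (N : Subgroup (GL (Fin 2) (ZMod (p ^ n))))
    (hNlow : ∀ A ∈ N, (A : Matrix (Fin 2) (Fin 2) (ZMod (p ^ n))) 0 0 = 1 ∧
      (A : Matrix (Fin 2) (Fin 2) (ZMod (p ^ n))) 1 1 = 1 ∧
      (A : Matrix (Fin 2) (Fin 2) (ZMod (p ^ n))) 0 1 = 0)
    (hNcyc : IsCyclic ↥N) (hNp : IsPGroup p ↥N)
    (hnorm : ∀ h ∈ N, rho * h * rho⁻¹ ∈ N)
    (S : Subgroup (GL (Fin 2) (ZMod (p ^ n))))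
    (hS : S = Subgroup.closure (insert rho (N : Set (GL (Fin 2) (ZMod (p ^ n)))))) :
    (N ≤ S ∧ ∀ Q : Subgroup (GL (Fin 2) (ZMod (p ^ n))),
        Q ≤ S → IsPGroup p ↥Q → Q ≤ N) ∧
    (∀ Z : GL (Fin 2) (ZMod (p ^ n)) → (Fin 2 → ZMod (p ^ n)),
      (∀ σ ∈ S, ∀ τ ∈ S, Z (σ * τ) = Z σ +
        (σ : Matrix (Fin 2) (Fin 2) (ZMod (p ^ n))).mulVec (Z τ)) →
      (∀ σ ∈ S, ∃ W : Fin 2 → ZMod (p ^ n),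
        Z σ = (σ : Matrix (Fin 2) (Fin 2) (ZMod (p ^ n))).mulVec W - W) →
      ∃ P : Fin 2 → ZMod (p ^ n), ∀ σ ∈ S,
        Z σ = (σ : Matrix (Fin 2) (Fin 2) (ZMod (p ^ n))).mulVec P - P) :=
  stmt_16_general p hp n rho hord N hNcyc hnorm S hS
end
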